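/- arXiv:2511.02272 — 3 statements merged into one kernel-verified Lean document; each statement's English description precedes it below -/
import Mathlib

section
/- For m ∈ ℕ, b > 0, c > b, the function f(z) = ₂F₁(-m, b; c; z) is convex on [0,1] and Lipschitz with constant L = mb/c, i.e. |f(z₁) - f(z₂)| ≤ (mb/c)|z₁ - z₂| for all z₁, z₂ ∈ [0,1]. -/
/-- The truncated Gauss hypergeometric polynomial
`₂F₁(-m,b;c;z) = ∑_{k=0}^m (-m)_k (b)_k / ((c)_k k!) z^k`. -/
noncomputable def hypF (m : ℕ) (b c z : ℝ) : ℝ :=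
  ∑ k ∈ Finset.range (m + 1),
    (∏ r ∈ Finset.range k, (-(m : ℝ) + r)) * (∏ r ∈ Finset.range k, (b + r)) /
      ((∏ r ∈ Finset.range k, (c + r)) * (Nat.factorial k : ℝ)) * z ^ k

/-!
Write `F(m, b, c)` for `z ↦ ₂F₁(-m, b; c; z)`. The contiguous relation
`F(m+1, b, c) = (1 - z) F(m, b, c) + z (c - b)/c F(m, b, c + 1)` presents `F(m, b, c)(z)`, for
`z ∈ [0,1]` and `0 ≤ b ≤ c`, as an iterated convex combination of numbers in `[0,1]`, so
`0 ≤ F ≤ 1` there. Since `F(m, b, c)' = -(m b / c) F(m - 1, b + 1, c + 1)`, the derivative is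
bounded by `m b / c` in absolute value, and it is nondecreasing because `F(m - 1, b + 1, c + 1)`
has nonpositive derivative by the same bound.
-/

open Finset Set

theorem ascPochhammer_eval_eq_prod {S : Type*} [CommSemiring S] (x : S) (k : ℕ) :
    (ascPochhammer S k).eval x = ∏ r ∈ range k, (x + r) := by
  induction k with
  | zero => simp
  | succ k ih => rw [ascPochhammer_succ_eval, ih, prod_range_succ]

theorem ascPochhammer_succ_eval_left {S : Type*} [CommSemiring S] (x : S) (k : ℕ) :
    (ascPochhammer S (k + 1)).eval x = x * (ascPochhammer S k).eval (x + 1) := by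
  simp [ascPochhammer_succ_left, Polynomial.eval_comp]

theorem ascPochhammer_eval_neg_succ (m k : ℕ) :
    (ascPochhammer ℝ (k + 1)).eval (-((m : ℝ) + 1)) =
      -((m : ℝ) + 1) * (ascPochhammer ℝ k).eval (-(m : ℝ)) := by
  rw [ascPochhammer_succ_eval_left, neg_add, neg_add_cancel_right]

noncomputable def hypCoeff (m : ℕ) (b c : ℝ) (k : ℕ) : ℝ :=
  (ascPochhammer ℝ k).eval (-(m : ℝ)) * (ascPochhammer ℝ k).eval b /
    ((ascPochhammer ℝ k).eval c * (k.factorial : ℝ))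

theorem hypF_eq_sum (m : ℕ) (b c z : ℝ) :
    hypF m b c z = ∑ k ∈ range (m + 1), hypCoeff m b c k * z ^ k := by
  simp only [hypF, hypCoeff, ascPochhammer_eval_eq_prod]

@[simp]
theorem hypCoeff_zero (m : ℕ) (b c : ℝ) : hypCoeff m b c 0 = 1 := by
  simp [hypCoeff]

theorem hypCoeff_succ_self (m : ℕ) (b c : ℝ) : hypCoeff m b c (m + 1) = 0 := by
  simp [hypCoeff, ascPochhammer_eval_neg_coe_nat_of_lt (Nat.lt_succ_self m)]

@[simp]
theorem hypF_zero (b c : ℝ) : hypF 0 b c = fun _ => 1 := by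
  ext z
  simp [hypF_eq_sum]

theorem hypCoeff_succ_succ (m k : ℕ) (b : ℝ) {c : ℝ} (hc : 0 < c) :
    hypCoeff (m + 1) b c (k + 1) =
      hypCoeff m b c (k + 1) - hypCoeff m b c k + (c - b) / c * hypCoeff m b (c + 1) k := by
  have hck : 0 < (ascPochhammer ℝ k).eval c := ascPochhammer_pos k c hc
  have hc1k : (ascPochhammer ℝ k).eval (c + 1) =
      (ascPochhammer ℝ k).eval c * (c + k) / c := by
    rw [eq_div_iff hc.ne', ← ascPochhammer_succ_eval, ascPochhammer_succ_eval_left, mul_comm]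
  simp only [hypCoeff, Nat.cast_succ]
  rw [ascPochhammer_eval_neg_succ]
  simp only [ascPochhammer_succ_eval, hc1k, Nat.factorial_succ, Nat.cast_mul, Nat.cast_succ]
  field_simp
  ring

theorem succ_mul_hypCoeff_succ_succ (m k : ℕ) (b : ℝ) {c : ℝ} (hc : 0 < c) :
    ((k : ℝ) + 1) * hypCoeff (m + 1) b c (k + 1) =
      -(((m : ℝ) + 1) * b / c) * hypCoeff m (b + 1) (c + 1) k := by
  have hck : 0 < (ascPochhammer ℝ k).eval (c + 1) := ascPochhammer_pos k _ (by linarith)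
  simp only [hypCoeff, Nat.cast_succ]
  rw [ascPochhammer_eval_neg_succ]
  simp only [ascPochhammer_succ_eval_left b, ascPochhammer_succ_eval_left c, Nat.factorial_succ,
    Nat.cast_mul, Nat.cast_succ]
  field_simp

theorem hypF_succ (m : ℕ) (b : ℝ) {c : ℝ} (hc : 0 < c) (z : ℝ) :
    hypF (m + 1) b c z = (1 - z) * hypF m b c z + z * ((c - b) / c) * hypF m b (c + 1) z := by
  have hF : hypF m b c z = ∑ k ∈ range (m + 1), hypCoeff m b c (k + 1) * z ^ (k + 1) + 1 := by
    have hpad := sum_range_succ' (fun k => hypCoeff m b c k * z ^ k) (m + 1)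
    rw [sum_range_succ, hypCoeff_succ_self, zero_mul, add_zero, hypCoeff_zero, pow_zero,
      mul_one] at hpad
    rw [hypF_eq_sum, hpad]
  have hzF : z * hypF m b c z = ∑ k ∈ range (m + 1), hypCoeff m b c k * z ^ (k + 1) := by
    rw [hypF_eq_sum, mul_sum]
    exact sum_congr rfl fun k _ => by ring
  have hzF' : z * ((c - b) / c) * hypF m b (c + 1) z =
      ∑ k ∈ range (m + 1), (c - b) / c * hypCoeff m b (c + 1) k * z ^ (k + 1) := by
    rw [hypF_eq_sum, mul_sum]
    exact sum_congr rfl fun k _ => by ring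
  rw [hypF_eq_sum, sum_range_succ']
  simp only [hypCoeff_succ_succ m _ b hc, hypCoeff_zero, pow_zero, mul_one, add_mul, sub_mul,
    sum_add_distrib, sum_sub_distrib]
  linear_combination -hF + hzF - hzF'

theorem hypF_mem_Icc (m : ℕ) (b c : ℝ) {z : ℝ} (hb : 0 ≤ b) (hbc : b ≤ c) (hc : 0 < c)
    (hz : z ∈ Icc (0 : ℝ) 1) : hypF m b c z ∈ Icc (0 : ℝ) 1 := by
  induction m generalizing c with
  | zero => simp
  | succ m ih =>
    have hq : (c - b) / c * hypF m b (c + 1) z ∈ Icc (0 : ℝ) 1 :=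
      unitInterval.mul_mem ⟨div_nonneg (by linarith) hc.le, (div_le_one hc).2 (by linarith)⟩
        (ih (c + 1) (by linarith) (by linarith))
    have hconv :=
      convex_Icc (0 : ℝ) 1 (ih c hbc hc) hq (sub_nonneg.2 hz.2) hz.1 (sub_add_cancel 1 z)
    rw [hypF_succ m b hc]
    convert hconv using 1
    simp only [smul_eq_mul]
    ring

theorem hasDerivAt_hypF_succ (m : ℕ) (b : ℝ) {c : ℝ} (hc : 0 < c) (z : ℝ) :
    HasDerivAt (hypF (m + 1) b c) (-(((m : ℝ) + 1) * b / c) * hypF m (b + 1) (c + 1) z) z := by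
  have hsum : HasDerivAt (hypF (m + 1) b c)
      (∑ k ∈ range (m + 2), hypCoeff (m + 1) b c k * (k * z ^ (k - 1))) z := by
    rw [show hypF (m + 1) b c = fun w => ∑ k ∈ range (m + 2), hypCoeff (m + 1) b c k * w ^ k
      from funext (hypF_eq_sum _ b c)]
    exact HasDerivAt.fun_sum fun k _ => (hasDerivAt_pow k z).const_mul _
  convert hsum using 1
  rw [sum_range_succ', hypF_eq_sum, mul_sum]
  simp only [Nat.cast_zero, zero_mul, mul_zero, add_zero, Nat.add_sub_cancel, Nat.cast_succ]
  refine sum_congr rfl fun k _ => ?_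
  rw [← mul_assoc, ← succ_mul_hypCoeff_succ_succ m k b hc]
  ring

/-- For `m = 0` the truncated `m - 1` is harmless, as the factor `m` vanishes. -/
theorem hasDerivAt_hypF (m : ℕ) (b : ℝ) {c : ℝ} (hc : 0 < c) (z : ℝ) :
    HasDerivAt (hypF m b c) (-((m : ℝ) * b / c) * hypF (m - 1) (b + 1) (c + 1) z) z := by
  cases m with
  | zero => simpa using hasDerivAt_const z (1 : ℝ)
  | succ m => simpa using hasDerivAt_hypF_succ m b hc z

theorem differentiable_hypF (m : ℕ) (b : ℝ) {c : ℝ} (hc : 0 < c) :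
    Differentiable ℝ (hypF m b c) :=
  fun z => (hasDerivAt_hypF m b hc z).differentiableAt

theorem hypF_antitoneOn (m : ℕ) (b c : ℝ) (hb : 0 ≤ b) (hbc : b ≤ c) (hc : 0 < c) :
    AntitoneOn (hypF m b c) (Icc 0 1) := by
  have hdiff := differentiable_hypF m b hc
  refine antitoneOn_of_deriv_nonpos (convex_Icc 0 1) hdiff.continuous.continuousOn
    hdiff.differentiableOn fun z hz => ?_
  have hF := hypF_mem_Icc (m - 1) (b + 1) (c + 1) (by linarith) (by linarith) (by linarith)
    (interior_subset hz)
  rw [(hasDerivAt_hypF m b hc z).deriv, neg_mul]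
  exact neg_nonpos.2 (mul_nonneg (by positivity) hF.1)

/-- For `m ∈ ℕ`, `b > 0`, `c > b`, `z ↦ ₂F₁(-m,b;c;z)` is convex on `[0,1]` and
Lipschitz there with constant `m b / c`. -/
theorem hypF_convex_and_lipschitz (m : ℕ) (b c : ℝ) (hb : 0 < b) (hc : b < c) :
    ConvexOn ℝ (Set.Icc (0:ℝ) 1) (hypF m b c) ∧
      ∀ z₁ ∈ Set.Icc (0:ℝ) 1, ∀ z₂ ∈ Set.Icc (0:ℝ) 1,
        |hypF m b c z₁ - hypF m b c z₂| ≤ (m * b / c) * |z₁ - z₂| := by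
  have hc0 : 0 < c := hb.trans hc
  have hL : 0 ≤ (m : ℝ) * b / c := by positivity
  have hdiff := differentiable_hypF m b hc0
  refine ⟨?convex, fun z₁ hz₁ z₂ hz₂ => ?lipschitz⟩
  case convex =>
    have hanti := hypF_antitoneOn (m - 1) (b + 1) (c + 1) (by linarith) (by linarith) (by linarith)
    refine MonotoneOn.convexOn_of_deriv (convex_Icc 0 1) hdiff.continuous.continuousOn
      hdiff.differentiableOn fun x hx y hy hxy => ?_
    simp only [(hasDerivAt_hypF m b hc0 _).deriv]
    exact mul_le_mul_of_nonpos_left (hanti (interior_subset hx) (interior_subset hy) hxy)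
      (neg_nonpos.2 hL)
  case lipschitz =>
    have hbound : ∀ z ∈ Icc (0 : ℝ) 1,
        ‖-((m : ℝ) * b / c) * hypF (m - 1) (b + 1) (c + 1) z‖ ≤ m * b / c := fun z hz => by
      have hG := hypF_mem_Icc (m - 1) (b + 1) (c + 1) (by linarith) (by linarith) (by linarith) hz
      rw [norm_mul, norm_neg, Real.norm_of_nonneg hL, Real.norm_of_nonneg hG.1]
      exact mul_le_of_le_one_right hL hG.2
    simpa only [Real.norm_eq_abs] using (convex_Icc 0 1).norm_image_sub_le_of_norm_hasDerivWithin_le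
      (fun z _ => (hasDerivAt_hypF m b hc0 z).hasDerivWithinAt) hbound hz₂ hz₁
end

section
/- Let α₁,…,α_m ∈ [0,1] with mean ᾱ and variance V, β > 0, q > 0. Then 0 ≤ ∫₀¹ t^{q-1}(1 - ᾱ + ᾱt^β)^m dt - ∫₀¹ t^{q-1}∏ᵢ(1 - αᵢ + αᵢt^β) dt ≤ (m/2)V ∫₀¹ t^{q-1}(1 - ᾱ + ᾱt^β)^m (1-t^β)²/t^{2β} dt. -/
/-!
Fix `t ∈ (0, 1)` and put `x = t ^ β`. The factors `aᵢ = 1 - αᵢ + αᵢ x` lie in `[x, 1]` and have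
mean `A = 1 - ᾱ + ᾱ x ≥ x`. Writing `∏ aᵢ = A ^ m * exp (-Φ)` with
`Φ = ∑ (aᵢ/A - 1 - log (aᵢ/A)) ≥ 0` gives AM–GM, and `1 - e^{-Φ} ≤ Φ` reduces the gap to bounding
`u - 1 - log u` quadratically; since `aᵢ, A ≥ x` this yields `Φ ≤ ∑ (aᵢ - A)² / (2x²)`
`= m V (1 - x)² / (2x²)`. Integrating against `t ^ (q - 1)` gives both inequalities.
-/

open Real Finset

lemma two_mul_sub_one_div_add_one_le_log {u : ℝ} (hu : 1 ≤ u) :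
    2 * (u - 1) / (u + 1) ≤ log u := by
  have hx0 : 0 ≤ (u - 1) / (u + 1) := by apply div_nonneg <;> linarith
  have hx1 : (u - 1) / (u + 1) < 1 := by rw [div_lt_one (by linarith)]; linarith
  have h := sum_range_le_log_div hx0 hx1 1
  have hu' : (1 + (u - 1) / (u + 1)) / (1 - (u - 1) / (u + 1)) = u := by
    field_simp; ring
  rw [hu', sum_range_one] at h
  rw [mul_div_assoc]
  linarith

lemma sub_inv_div_two_le_log {u : ℝ} (hu0 : 0 < u) (hu1 : u ≤ 1) : (u - u⁻¹) / 2 ≤ log u := by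
  rw [← sinh_log hu0]
  exact sinh_le_self_iff.2 (log_nonpos hu0.le hu1)

lemma sub_one_sub_log_le_of_one_le {u : ℝ} (hu : 1 ≤ u) : u - 1 - log u ≤ (u - 1) ^ 2 / 2 :=
  calc u - 1 - log u ≤ u - 1 - 2 * (u - 1) / (u + 1) := by
        linarith [two_mul_sub_one_div_add_one_le_log hu]
    _ = (u - 1) ^ 2 / (u + 1) := by field_simp; ring
    _ ≤ (u - 1) ^ 2 / 2 := div_le_div_of_nonneg_left (sq_nonneg _) two_pos (by linarith)

lemma sub_one_sub_log_le_of_le_one {u : ℝ} (hu0 : 0 < u) (hu1 : u ≤ 1) :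
    u - 1 - log u ≤ (u - 1) ^ 2 / (2 * u) :=
  calc u - 1 - log u ≤ u - 1 - (u - u⁻¹) / 2 := by linarith [sub_inv_div_two_le_log hu0 hu1]
    _ = (u - 1) ^ 2 / (2 * u) := by field_simp; ring

lemma div_sub_one_sub_log_div_le {a A c : ℝ} (hc : 0 < c) (ha : c ≤ a) (hA : c ≤ A) :
    a / A - 1 - log (a / A) ≤ (a - A) ^ 2 / (2 * c ^ 2) := by
  have hA0 : 0 < A := hc.trans_le hA
  have ha0 : 0 < a := hc.trans_le ha
  rcases le_total a A with haA | hAa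
  · calc a / A - 1 - log (a / A) ≤ (a / A - 1) ^ 2 / (2 * (a / A)) :=
          sub_one_sub_log_le_of_le_one (by positivity) ((div_le_one hA0).2 haA)
      _ = (a - A) ^ 2 / (2 * (a * A)) := by field_simp
      _ ≤ (a - A) ^ 2 / (2 * c ^ 2) := by gcongr; nlinarith
  · calc a / A - 1 - log (a / A) ≤ (a / A - 1) ^ 2 / 2 :=
          sub_one_sub_log_le_of_one_le ((one_le_div hA0).2 hAa)
      _ = (a - A) ^ 2 / (2 * A ^ 2) := by field_simp
      _ ≤ (a - A) ^ 2 / (2 * c ^ 2) := by gcongr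

section MeanPow

variable {ι : Type*} [Fintype ι] {a : ι → ℝ} {A : ℝ}

lemma prod_eq_pow_mul_exp_neg (ha : ∀ i, 0 < a i) (hA : 0 < A)
    (hsum : ∑ i, a i = Fintype.card ι * A) :
    ∏ i, a i = A ^ Fintype.card ι * exp (-∑ i, (a i / A - 1 - log (a i / A))) := by
  have hlin : ∑ i, (a i / A - 1) = 0 := by
    rw [sum_sub_distrib, ← sum_div, hsum]
    field_simp
    simp only [sum_const, card_univ, nsmul_eq_mul, mul_one, sub_self]
  rw [sum_sub_distrib, hlin, zero_sub, neg_neg, exp_sum]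
  simp_rw [exp_log (div_pos (ha _) hA)]
  rw [prod_div_distrib, prod_const, card_univ]
  field_simp

lemma sum_sub_one_sub_log_div_nonneg (ha : ∀ i, 0 < a i) (hA : 0 < A) :
    0 ≤ ∑ i, (a i / A - 1 - log (a i / A)) :=
  sum_nonneg fun i _ => by linarith [log_le_sub_one_of_pos (div_pos (ha i) hA)]

lemma prod_le_pow_of_sum_eq (ha : ∀ i, 0 < a i) (hA : 0 < A)
    (hsum : ∑ i, a i = Fintype.card ι * A) : ∏ i, a i ≤ A ^ Fintype.card ι := by
  rw [prod_eq_pow_mul_exp_neg ha hA hsum]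
  refine mul_le_of_le_one_right (by positivity) (exp_le_one_iff.2 ?_)
  linarith [sum_sub_one_sub_log_div_nonneg ha hA]

lemma pow_sub_prod_le_of_sum_eq {c : ℝ} (hc : 0 < c) (ha : ∀ i, c ≤ a i) (hA : c ≤ A)
    (hsum : ∑ i, a i = Fintype.card ι * A) :
    A ^ Fintype.card ι - ∏ i, a i ≤ A ^ Fintype.card ι * ∑ i, (a i - A) ^ 2 / (2 * c ^ 2) := by
  have ha0 i : 0 < a i := hc.trans_le (ha i)
  have hA0 : 0 < A := hc.trans_le hA
  set Φ := ∑ i, (a i / A - 1 - log (a i / A))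
  have hΦ : Φ ≤ ∑ i, (a i - A) ^ 2 / (2 * c ^ 2) :=
    sum_le_sum fun i _ => div_sub_one_sub_log_div_le hc (ha i) hA
  calc A ^ Fintype.card ι - ∏ i, a i = A ^ Fintype.card ι * (1 - exp (-Φ)) := by
        rw [prod_eq_pow_mul_exp_neg ha0 hA0 hsum]; ring
    _ ≤ A ^ Fintype.card ι * Φ := by gcongr; linarith [add_one_le_exp (-Φ)]
    _ ≤ _ := by gcongr

end MeanPow

section Mixture

variable {ι : Type*} [Fintype ι] {α : ι → ℝ} {ᾱ x : ℝ}

lemma le_one_sub_add_mul {a : ℝ} (ha : a ≤ 1) (hx : x ≤ 1) : x ≤ 1 - a + a * x := by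
  nlinarith [mul_nonneg (sub_nonneg.2 ha) (sub_nonneg.2 hx)]

lemma sum_one_sub_add_mul (hᾱ : ∑ i, α i = Fintype.card ι * ᾱ) :
    ∑ i, (1 - α i + α i * x) = Fintype.card ι * (1 - ᾱ + ᾱ * x) := by
  rw [sum_add_distrib, sum_sub_distrib, ← sum_mul, hᾱ]
  simp only [sum_const, card_univ, nsmul_eq_mul, mul_one]
  ring

lemma prod_one_sub_add_mul_le_pow (hα : ∀ i, α i ≤ 1) (hᾱ : ∑ i, α i = Fintype.card ι * ᾱ)
    (hᾱ1 : ᾱ ≤ 1) (hx : x ∈ Set.Ioc 0 1) :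
    ∏ i, (1 - α i + α i * x) ≤ (1 - ᾱ + ᾱ * x) ^ Fintype.card ι :=
  prod_le_pow_of_sum_eq (fun i => hx.1.trans_le (le_one_sub_add_mul (hα i) hx.2))
    (hx.1.trans_le (le_one_sub_add_mul hᾱ1 hx.2)) (sum_one_sub_add_mul hᾱ)

lemma pow_sub_prod_one_sub_add_mul_le (hα : ∀ i, α i ≤ 1)
    (hᾱ : ∑ i, α i = Fintype.card ι * ᾱ) (hᾱ1 : ᾱ ≤ 1) (hx : x ∈ Set.Ioc 0 1) :
    (1 - ᾱ + ᾱ * x) ^ Fintype.card ι - ∏ i, (1 - α i + α i * x) ≤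
      (∑ i, (α i - ᾱ) ^ 2) / 2 * (1 - ᾱ + ᾱ * x) ^ Fintype.card ι * (1 - x) ^ 2 / x ^ 2 := by
  refine (pow_sub_prod_le_of_sum_eq hx.1 (fun i => le_one_sub_add_mul (hα i) hx.2)
    (le_one_sub_add_mul hᾱ1 hx.2) (sum_one_sub_add_mul hᾱ)).trans_eq ?_
  simp_rw [show ∀ i, (1 - α i + α i * x - (1 - ᾱ + ᾱ * x)) ^ 2 = (α i - ᾱ) ^ 2 * (1 - x) ^ 2
    from fun i => by ring, ← sum_div, ← sum_mul]
  field_simp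

end Mixture

open intervalIntegral in
/-- Simple upper bound on the integrated AM–GM gap:
`0 ≤ ∫₀¹ t^(q-1)(1-ᾱ+ᾱ t^β)^m dt - ∫₀¹ t^(q-1)∏ᵢ(1-αᵢ+αᵢ t^β) dt
   ≤ (m/2) V ∫₀¹ t^(q-1)(1-ᾱ+ᾱ t^β)^m (1-t^β)²/t^(2β) dt`. -/
theorem integrated_amgm_gap_simple (m : ℕ) (hm : 0 < m) (α : Fin m → ℝ)
    (hα : ∀ i, α i ∈ Set.Icc (0:ℝ) 1) (β q : ℝ) (hβ : 0 < β) (hq : 0 < q)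
    (ᾱ V : ℝ) (hᾱ : ᾱ = (∑ i, α i) / m) (hV : V = (∑ i, (α i - ᾱ) ^ 2) / m)
    (hint : IntervalIntegrable
      (fun t : ℝ => t ^ (q - 1) * (1 - ᾱ + ᾱ * t ^ β) ^ m * (1 - t ^ β) ^ 2 / t ^ (2 * β))
      MeasureTheory.volume 0 1) :
    0 ≤ (∫ t in (0:ℝ)..1, t ^ (q - 1) * (1 - ᾱ + ᾱ * t ^ β) ^ m) -
        (∫ t in (0:ℝ)..1, t ^ (q - 1) * ∏ i, (1 - α i + α i * t ^ β)) ∧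
      (∫ t in (0:ℝ)..1, t ^ (q - 1) * (1 - ᾱ + ᾱ * t ^ β) ^ m) -
        (∫ t in (0:ℝ)..1, t ^ (q - 1) * ∏ i, (1 - α i + α i * t ^ β)) ≤
        (m / 2) * V *
          ∫ t in (0:ℝ)..1,
            t ^ (q - 1) * (1 - ᾱ + ᾱ * t ^ β) ^ m * (1 - t ^ β) ^ 2 / t ^ (2 * β) := by
  have hm0 : (m : ℝ) ≠ 0 := by positivity
  have hαle i : α i ≤ 1 := (hα i).2
  have hsum : ∑ i, α i = Fintype.card (Fin m) * ᾱ := by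
    rw [Fintype.card_fin, hᾱ, mul_div_cancel₀ _ hm0]
  have hᾱ1 : ᾱ ≤ 1 :=
    hᾱ ▸ div_le_one_of_le₀ ((sum_le_sum fun i _ => hαle i).trans_eq (by simp)) m.cast_nonneg
  have hcoef : (m : ℝ) / 2 * V = (∑ i, (α i - ᾱ) ^ 2) / 2 := by
    rw [hV]
    field_simp
  have hx t (ht : t ∈ Set.Ioo (0 : ℝ) 1) : t ^ β ∈ Set.Ioc 0 1 :=
    ⟨rpow_pos_of_pos ht.1 β, rpow_le_one ht.1.le ht.2.le hβ.le⟩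
  have hrpow := continuous_rpow_const hβ.le
  have hbase : IntervalIntegrable (fun t : ℝ => t ^ (q - 1)) MeasureTheory.volume 0 1 :=
    intervalIntegrable_rpow' (by linarith)
  have hF := hbase.mul_continuousOn (g := fun t => (1 - ᾱ + ᾱ * t ^ β) ^ m) (by fun_prop)
  have hG := hbase.mul_continuousOn (g := fun t => ∏ i, (1 - α i + α i * t ^ β)) (by fun_prop)
  constructor
  · refine sub_nonneg.2 (integral_mono_on_of_le_Ioo zero_le_one hG hF fun t ht => ?_)
    have hle := prod_one_sub_add_mul_le_pow hαle hsum hᾱ1 (hx t ht)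
    rw [Fintype.card_fin] at hle
    exact mul_le_mul_of_nonneg_left hle (rpow_nonneg ht.1.le _)
  · rw [← integral_sub hF hG, hcoef, ← integral_const_mul]
    refine integral_mono_on_of_le_Ioo zero_le_one (hF.sub hG) (hint.const_mul _) fun t ht => ?_
    have hgap := pow_sub_prod_one_sub_add_mul_le hαle hsum hᾱ1 (hx t ht)
    rw [Fintype.card_fin] at hgap
    rw [mul_comm 2 β, rpow_mul ht.1.le, rpow_two, ← mul_sub]
    exact (mul_le_mul_of_nonneg_left hgap (rpow_nonneg ht.1.le _)).trans_eq (by ring)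
end

section
/- Let {β₁,…,β_m} take d distinct values b₁,…,b_d, with groups S_j = {i : βᵢ = b_j} of sizes m_j and group means ᾱ_j = (1/m_j)Σ_{i∈S_j}αᵢ. For q > 0, ∫₀¹ t^{q-1}∏ᵢ(1 - αᵢ + αᵢ t^{βᵢ}) dt ≤ ∏_{j=1}^d [ ∫₀¹ t^{q-1}(1 - ᾱ_j + ᾱ_j t^{b_j})^m dt ]^{m_j/m}, where m = Σ_j m_j. -/
/-!
Group the factors by bin. Within a bin all exponents equal `b_j`, so AM–GM bounds the product of
the `m_j` affine factors by the `m_j`-th power of the affine factor at the bin mean `ᾱ_j`. Writing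
`t^{q-1} = ∏_j t^{(q-1) m_j/m}`, the integrand is then dominated by `∏_j F_j^{m_j/m}` with
`F_j = t^{q-1} (1 - ᾱ_j + ᾱ_j t^{b_j})^m`, and Hölder's inequality with exponents `m/m_j`
finishes the proof.
-/

open Finset MeasureTheory

def bin {ι Y : Type*} [Fintype ι] [DecidableEq Y] (β : ι → Y) (y : Y) : Finset ι :=
  univ.filter fun i => β i = y

noncomputable def binMean {ι Y : Type*} [Fintype ι] [DecidableEq Y] (α : ι → ℝ) (β : ι → Y)
    (y : Y) : ℝ :=
  (∑ i ∈ bin β y, α i) / #(bin β y)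

section Bins

variable {ι κ Y : Type*} [Fintype ι] [Fintype κ] [DecidableEq Y]

@[to_additive]
theorem prod_eq_prod_prod_bin {M : Type*} [CommMonoid M] {β : ι → Y} {b : κ → Y}
    (hb : Function.Injective b) (hβ : ∀ i, ∃ j, β i = b j) (f : ι → M) :
    ∏ i, f i = ∏ j, ∏ i ∈ bin β (b j), f i := by
  classical
  choose c hc using hβ
  rw [← prod_fiberwise_of_maps_to (g := c) (t := univ) (fun i _ => mem_univ _) f]
  refine prod_congr rfl fun j _ => prod_congr ?_ fun _ _ => rfl
  ext i
  simp [bin, hc i, hb.eq_iff]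

theorem card_eq_sum_card_bin {β : ι → Y} {b : κ → Y} (hb : Function.Injective b)
    (hβ : ∀ i, ∃ j, β i = b j) : Fintype.card ι = ∑ j, #(bin β (b j)) := by
  simpa using sum_eq_sum_sum_bin hb hβ (fun _ => (1 : ℕ))

end Bins

theorem sum_div_card_mem_Icc {ι : Type*} (s : Finset ι) {a : ι → ℝ}
    (ha : ∀ i ∈ s, a i ∈ Set.Icc 0 1) : (∑ i ∈ s, a i) / #s ∈ Set.Icc 0 1 := by
  refine ⟨div_nonneg (sum_nonneg fun i hi => (ha i hi).1) (Nat.cast_nonneg _),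
    div_le_one_of_le₀ ?_ (Nat.cast_nonneg _)⟩
  simpa using sum_le_sum fun i hi => (ha i hi).2

theorem one_sub_add_mul_nonneg {a x : ℝ} (ha : a ∈ Set.Icc 0 1) (hx : 0 ≤ x) :
    0 ≤ 1 - a + a * x := by
  nlinarith [ha.1, ha.2]

theorem one_sub_add_mul_mem_Icc {a x : ℝ} (ha : a ∈ Set.Icc 0 1) (hx : x ∈ Set.Icc 0 1) :
    1 - a + a * x ∈ Set.Icc 0 1 :=
  ⟨one_sub_add_mul_nonneg ha hx.1, by nlinarith [ha.1, hx.2]⟩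

theorem Real.prod_le_arith_mean_pow_card {ι : Type*} (s : Finset ι) {z : ι → ℝ}
    (hz : ∀ i ∈ s, 0 ≤ z i) : ∏ i ∈ s, z i ≤ ((∑ i ∈ s, z i) / #s) ^ #s := by
  rcases s.eq_empty_or_nonempty with rfl | hs
  · simp
  have hn : #s ≠ 0 := hs.card_pos.ne'
  have amgm := Real.geom_mean_le_arith_mean_weighted s (fun _ => (#s : ℝ)⁻¹) z
    (fun _ _ => by positivity) (by simp [hn]) hz
  calc ∏ i ∈ s, z i = (∏ i ∈ s, z i ^ (#s : ℝ)⁻¹) ^ #s := by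
        rw [← prod_pow]
        exact prod_congr rfl fun i hi => (Real.rpow_inv_natCast_pow (hz i hi) hn).symm
    _ ≤ (∑ i ∈ s, (#s : ℝ)⁻¹ * z i) ^ #s :=
        pow_le_pow_left₀ (prod_nonneg fun i hi => Real.rpow_nonneg (hz i hi) _) amgm _
    _ = ((∑ i ∈ s, z i) / #s) ^ #s := by rw [← mul_sum, inv_mul_eq_div]

theorem prod_one_sub_add_mul_le_pow_card {ι : Type*} (s : Finset ι) {a : ι → ℝ}
    (ha : ∀ i ∈ s, a i ∈ Set.Icc 0 1) {x : ℝ} (hx : 0 ≤ x) :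
    ∏ i ∈ s, (1 - a i + a i * x) ≤
      (1 - (∑ i ∈ s, a i) / #s + (∑ i ∈ s, a i) / #s * x) ^ #s := by
  rcases s.eq_empty_or_nonempty with rfl | hs
  · simp
  have hn : (#s : ℝ) ≠ 0 := by exact_mod_cast hs.card_pos.ne'
  have hmean : (∑ i ∈ s, (1 - a i + a i * x)) / #s =
      1 - (∑ i ∈ s, a i) / #s + (∑ i ∈ s, a i) / #s * x := by
    rw [sum_add_distrib, sum_sub_distrib, ← sum_mul, sum_const, nsmul_one]
    field_simp
  rw [← hmean]
  exact Real.prod_le_arith_mean_pow_card s fun i hi => one_sub_add_mul_nonneg (ha i hi) hx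

theorem mul_prod_pow_eq_prod_rpow {κ : Type*} (s : Finset κ) {y : ℝ} (hy : 0 ≤ y)
    {x : κ → ℝ} (hx : ∀ j ∈ s, 0 ≤ x j) {n : κ → ℕ} {m : ℕ} (hm : m ≠ 0)
    (hn : ∑ j ∈ s, n j = m) :
    y * ∏ j ∈ s, x j ^ n j = ∏ j ∈ s, (y * x j ^ m) ^ ((n j : ℝ) / m) := by
  have hm' : (m : ℝ) ≠ 0 := Nat.cast_ne_zero.mpr hm
  have hpow : ∀ j ∈ s, (x j ^ m) ^ ((n j : ℝ) / m) = x j ^ n j := fun j hj => by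
    rw [← Real.rpow_natCast (x j) m, ← Real.rpow_mul (hx j hj), mul_div_cancel₀ _ hm',
      Real.rpow_natCast]
  have hy1 : ∏ j ∈ s, y ^ ((n j : ℝ) / m) = y := by
    rw [← Real.rpow_sum_of_nonneg hy fun j _ => by positivity, ← sum_div, ← Nat.cast_sum, hn,
      div_self hm', Real.rpow_one]
  rw [prod_congr rfl fun j hj => Real.mul_rpow hy (pow_nonneg (hx j hj) m), prod_mul_distrib,
    hy1, prod_congr rfl hpow]

theorem mul_prod_le_prod_bin_rpow {ι κ : Type*} [Fintype ι] [Fintype κ] {α β : ι → ℝ}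
    {b : κ → ℝ} (hα : ∀ i, α i ∈ Set.Icc 0 1) (hb : Function.Injective b)
    (hβ : ∀ i, ∃ j, β i = b j) (hι : 0 < Fintype.card ι) {y t : ℝ} (hy : 0 ≤ y)
    (ht : 0 ≤ t) :
    y * ∏ i, (1 - α i + α i * t ^ β i) ≤
      ∏ j, (y * (1 - binMean α β (b j) + binMean α β (b j) * t ^ b j) ^ Fintype.card ι) ^
        ((#(bin β (b j)) : ℝ) / Fintype.card ι) := by
  have hmean : ∀ j, binMean α β (b j) ∈ Set.Icc 0 1 := fun j =>
    sum_div_card_mem_Icc _ fun i _ => hα i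
  rw [← mul_prod_pow_eq_prod_rpow univ hy
    (fun j _ => one_sub_add_mul_nonneg (hmean j) (Real.rpow_nonneg ht _)) hι.ne'
    (card_eq_sum_card_bin hb hβ).symm, prod_eq_prod_prod_bin hb hβ]
  refine mul_le_mul_of_nonneg_left (prod_le_prod (fun j _ => prod_nonneg fun i _ =>
    one_sub_add_mul_nonneg (hα i) (Real.rpow_nonneg ht _)) fun j _ => ?_) hy
  calc ∏ i ∈ bin β (b j), (1 - α i + α i * t ^ β i)
      = ∏ i ∈ bin β (b j), (1 - α i + α i * t ^ b j) :=
        prod_congr rfl fun i hi => by rw [(mem_filter.mp hi).2]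
    _ ≤ _ := prod_one_sub_add_mul_le_pow_card _ (fun i _ => hα i) (Real.rpow_nonneg ht _)

section Holder

variable {α ι : Type*} [MeasurableSpace α] {μ : Measure α}

theorem lintegral_ofReal_prod_rpow_le (s : Finset ι) {f : ι → α → ℝ}
    (hf : ∀ i ∈ s, Integrable (f i) μ) (hf0 : ∀ i ∈ s, 0 ≤ᵐ[μ] f i) {p : ι → ℝ}
    (hp : ∑ i ∈ s, p i = 1) (hp0 : ∀ i ∈ s, 0 ≤ p i) :
    ∫⁻ a, ENNReal.ofReal (∏ i ∈ s, f i a ^ p i) ∂μ ≤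
      ∏ i ∈ s, ENNReal.ofReal (∫ a, f i a ∂μ) ^ p i := by
  have hf0' : ∀ᵐ a ∂μ, ∀ i ∈ s, 0 ≤ f i a := (Filter.eventually_all_finset s).mpr hf0
  calc ∫⁻ a, ENNReal.ofReal (∏ i ∈ s, f i a ^ p i) ∂μ
      = ∫⁻ a, ∏ i ∈ s, ENNReal.ofReal (f i a) ^ p i ∂μ := by
        refine lintegral_congr_ae (hf0'.mono fun a ha => ?_)
        dsimp only
        rw [ENNReal.ofReal_prod_of_nonneg fun i hi => Real.rpow_nonneg (ha i hi) _]
        exact prod_congr rfl fun i hi => (ENNReal.ofReal_rpow_of_nonneg (ha i hi) (hp0 i hi)).symm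
    _ ≤ ∏ i ∈ s, (∫⁻ a, ENNReal.ofReal (f i a) ∂μ) ^ p i :=
        ENNReal.lintegral_prod_norm_pow_le s
          (fun i hi => (hf i hi).aemeasurable.ennreal_ofReal) hp hp0
    _ = ∏ i ∈ s, ENNReal.ofReal (∫ a, f i a ∂μ) ^ p i :=
        prod_congr rfl fun i hi => by
          rw [ofReal_integral_eq_lintegral_ofReal (hf i hi) (hf0 i hi)]

theorem ae_nonneg_prod_rpow (s : Finset ι) {f : ι → α → ℝ} (hf0 : ∀ i ∈ s, 0 ≤ᵐ[μ] f i)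
    (p : ι → ℝ) : 0 ≤ᵐ[μ] fun a => ∏ i ∈ s, f i a ^ p i :=
  ((Filter.eventually_all_finset s).mpr hf0).mono fun _ ha =>
    prod_nonneg fun i hi => Real.rpow_nonneg (ha i hi) _

theorem aestronglyMeasurable_prod_rpow (s : Finset ι) {f : ι → α → ℝ}
    (hf : ∀ i ∈ s, AEMeasurable (f i) μ) (p : ι → ℝ) :
    AEStronglyMeasurable (fun a => ∏ i ∈ s, f i a ^ p i) μ :=
  (s.aemeasurable_fun_prod fun i hi => (hf i hi).pow_const (p i)).aestronglyMeasurable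

theorem prod_ofReal_rpow_ne_top (s : Finset ι) (x p : ι → ℝ) (hp0 : ∀ i ∈ s, 0 ≤ p i) :
    ∏ i ∈ s, ENNReal.ofReal (x i) ^ p i ≠ ⊤ :=
  ENNReal.prod_ne_top fun i hi => ENNReal.rpow_ne_top_of_nonneg (hp0 i hi) ENNReal.ofReal_ne_top

theorem integrable_prod_rpow (s : Finset ι) {f : ι → α → ℝ}
    (hf : ∀ i ∈ s, Integrable (f i) μ) (hf0 : ∀ i ∈ s, 0 ≤ᵐ[μ] f i) {p : ι → ℝ}
    (hp : ∑ i ∈ s, p i = 1) (hp0 : ∀ i ∈ s, 0 ≤ p i) :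
    Integrable (fun a => ∏ i ∈ s, f i a ^ p i) μ :=
  ⟨aestronglyMeasurable_prod_rpow s (fun i hi => (hf i hi).aemeasurable) p,
    (hasFiniteIntegral_iff_ofReal (ae_nonneg_prod_rpow s hf0 p)).mpr
      ((lintegral_ofReal_prod_rpow_le s hf hf0 hp hp0).trans_lt
        (prod_ofReal_rpow_ne_top s _ p hp0).lt_top)⟩

theorem integral_prod_rpow_le (s : Finset ι) {f : ι → α → ℝ}
    (hf : ∀ i ∈ s, Integrable (f i) μ) (hf0 : ∀ i ∈ s, 0 ≤ᵐ[μ] f i) {p : ι → ℝ}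
    (hp : ∑ i ∈ s, p i = 1) (hp0 : ∀ i ∈ s, 0 ≤ p i) :
    ∫ a, ∏ i ∈ s, f i a ^ p i ∂μ ≤ ∏ i ∈ s, (∫ a, f i a ∂μ) ^ p i := by
  rw [integral_eq_lintegral_of_nonneg_ae (ae_nonneg_prod_rpow s hf0 p)
    (aestronglyMeasurable_prod_rpow s (fun i hi => (hf i hi).aemeasurable) p)]
  calc _ ≤ (∏ i ∈ s, ENNReal.ofReal (∫ a, f i a ∂μ) ^ p i).toReal :=
        ENNReal.toReal_mono (prod_ofReal_rpow_ne_top s _ p hp0)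
          (lintegral_ofReal_prod_rpow_le s hf hf0 hp hp0)
    _ = ∏ i ∈ s, (∫ a, f i a ∂μ) ^ p i := by
        rw [ENNReal.toReal_prod]
        refine prod_congr rfl fun i hi => ?_
        rw [← ENNReal.toReal_rpow, ENNReal.toReal_ofReal (integral_nonneg_of_ae (hf0 i hi))]

end Holder

theorem integrableOn_rpow_sub_one_mul {q C : ℝ} (hq : 0 < q) {g : ℝ → ℝ}
    (hg : AEStronglyMeasurable g (volume.restrict (Set.Ioc 0 1)))
    (hC : ∀ t ∈ Set.Ioc (0 : ℝ) 1, ‖g t‖ ≤ C) :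
    IntegrableOn (fun t => t ^ (q - 1) * g t) (Set.Ioc 0 1) := by
  have hbase : IntegrableOn (fun t : ℝ => t ^ (q - 1)) (Set.Ioc 0 1) :=
    (intervalIntegrable_iff_integrableOn_Ioc_of_le zero_le_one).mp
      (intervalIntegral.intervalIntegrable_rpow' (by linarith))
  exact hbase.mul_bdd hg ((ae_restrict_iff' measurableSet_Ioc).mpr (ae_of_all _ hC))

/-- Binned Hölder bound: if the exponents `βᵢ` take the `d` distinct values
`b₁,…,b_d`, with groups `S_j = {i : βᵢ = b_j}` of sizes `m_j` and group means
`ᾱ_j`, then for `q > 0`,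
`∫₀¹ t^{q-1} ∏ᵢ (1-αᵢ+αᵢ t^{βᵢ}) dt
  ≤ ∏_j [∫₀¹ t^{q-1} (1-ᾱ_j+ᾱ_j t^{b_j})^m dt]^{m_j/m}`. -/
theorem binned_holder_bound (m d : ℕ) (hm : 0 < m)
    (α βv : Fin m → ℝ) (b : Fin d → ℝ)
    (hα : ∀ i, α i ∈ Set.Icc (0:ℝ) 1) (hb : ∀ j, 0 < b j)
    (hbinj : Function.Injective b) (hβ : ∀ i, ∃ j, βv i = b j)
    (q : ℝ) (hq : 0 < q) :
    (∫ t in (0:ℝ)..1, t ^ (q - 1) * ∏ i, (1 - α i + α i * t ^ βv i)) ≤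
      ∏ j : Fin d,
        (∫ t in (0:ℝ)..1,
            t ^ (q - 1) *
              (1 - (∑ i ∈ univ.filter (fun i => βv i = b j), α i) /
                    ((univ.filter (fun i => βv i = b j)).card : ℝ) +
                (∑ i ∈ univ.filter (fun i => βv i = b j), α i) /
                    ((univ.filter (fun i => βv i = b j)).card : ℝ) * t ^ b j) ^ m) ^
          (((univ.filter (fun i => βv i = b j)).card : ℝ) / (m : ℝ)) := by
  set p : Fin d → ℝ := fun j => (#(bin βv (b j)) : ℝ) / m
  set g : Fin d → ℝ → ℝ := fun j t => 1 - binMean α βv (b j) + binMean α βv (b j) * t ^ b j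
  set F : Fin d → ℝ → ℝ := fun j t => t ^ (q - 1) * g j t ^ m
  have hg : ∀ j, ∀ t ∈ Set.Ioc (0 : ℝ) 1, g j t ∈ Set.Icc 0 1 := fun j t ht =>
    one_sub_add_mul_mem_Icc (sum_div_card_mem_Icc _ fun i _ => hα i)
      ⟨Real.rpow_nonneg ht.1.le _, Real.rpow_le_one ht.1.le ht.2 (hb j).le⟩
  have hF : ∀ j ∈ univ, IntegrableOn (F j) (Set.Ioc 0 1) := fun j _ =>
    integrableOn_rpow_sub_one_mul hq (by fun_prop) fun t ht => by
      rw [Real.norm_of_nonneg (pow_nonneg (hg j t ht).1 m)]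
      exact pow_le_one₀ (hg j t ht).1 (hg j t ht).2
  have hF0 : ∀ j ∈ univ, 0 ≤ᵐ[volume.restrict (Set.Ioc 0 1)] F j := fun j _ =>
    (ae_restrict_iff' measurableSet_Ioc).mpr (ae_of_all _ fun t ht =>
      mul_nonneg (Real.rpow_nonneg ht.1.le _) (pow_nonneg (hg j t ht).1 m))
  have hp : ∑ j, p j = 1 := by
    rw [← sum_div, ← Nat.cast_sum, ← card_eq_sum_card_bin hbinj hβ, Fintype.card_fin,
      div_self (Nat.cast_ne_zero.mpr hm.ne')]
  have hp0 : ∀ j ∈ univ, 0 ≤ p j := fun j _ => by positivity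
  simp only [intervalIntegral.integral_of_le zero_le_one]
  calc _ ≤ ∫ t in Set.Ioc 0 1, ∏ j, F j t ^ p j :=
        integral_mono_of_nonneg ?_ (integrable_prod_rpow univ hF hF0 hp hp0) ?_
    _ ≤ ∏ j, (∫ t in Set.Ioc 0 1, F j t) ^ p j := integral_prod_rpow_le univ hF hF0 hp hp0
  · exact (ae_restrict_iff' measurableSet_Ioc).mpr (ae_of_all _ fun t ht =>
      mul_nonneg (Real.rpow_nonneg ht.1.le _) (prod_nonneg fun i _ =>
        one_sub_add_mul_nonneg (hα i) (Real.rpow_nonneg ht.1.le _)))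
  · refine (ae_restrict_iff' measurableSet_Ioc).mpr (ae_of_all _ fun t ht => ?_)
    have hpt := mul_prod_le_prod_bin_rpow hα hbinj hβ (by simpa using hm)
      (Real.rpow_nonneg ht.1.le (q - 1)) ht.1.le
    rwa [Fintype.card_fin] at hpt
end
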